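/- Assume Q_{A,0} = {0} (so that every Q_{A,b} is bounded). Define κ_A := sup_{c ∈ S^{d−1}} inf{ Σ_{k ∈ I*_p} p_k · ‖a_k − c/‖p‖₁‖₂ : p ∈ Q*_{A,c} }, where ‖p‖₁ := Σ_k p_k. For a nonempty convex compact set C ⊆ ℝ^d, let P(C) := Q_{A,b(C)} with b(C)_i := σ_C(a_i). Then for every nonempty convex compact C ⊆ ℝ^d one has C ⊆ P(C) and dist(P(C), C) ≤ κ_A · ‖C‖₂, where dist(S,T) := sup_{s ∈ S} inf_{t ∈ T} ‖s − t‖₂. -/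

import Mathlib

open scoped RealInnerProductSpace

noncomputable section

/-- `Q_{A,b} = {x ∈ ℝ^d : a_iᵀx ≤ b_i for all i}`. -/
def Qset {d N : ℕ} (a : Fin N → EuclideanSpace ℝ (Fin d)) (b : Fin N → ℝ) :
    Set (EuclideanSpace ℝ (Fin d)) :=
  {x | ∀ i, ⟪a i, x⟫ ≤ b i}

/-- `Q*_{A,c} = {p ∈ ℝ^N : p ≥ 0, Aᵀp = c}`. -/
def Qstar {d N : ℕ} (a : Fin N → EuclideanSpace ℝ (Fin d)) (c : EuclideanSpace ℝ (Fin d)) :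
    Set (Fin N → ℝ) :=
  {p | (∀ i, 0 ≤ p i) ∧ ∑ i, p i • a i = c}

/-- The support function `σ_C(v) = sup_{x ∈ C} vᵀx`. -/
def suppFn {d : ℕ} (C : Set (EuclideanSpace ℝ (Fin d))) (v : EuclideanSpace ℝ (Fin d)) : ℝ :=
  sSup ((fun x => ⟪v, x⟫) '' C)

/-- The size `‖C‖₂ = sup_{x ∈ C} ‖x‖₂`. -/
def setNorm {d : ℕ} (C : Set (EuclideanSpace ℝ (Fin d))) : ℝ :=
  sSup ((fun x => ‖x‖) '' C)

/-- `κ_A = sup_{c ∈ S^{d-1}} inf { Σ_k p_k ‖a_k - c/‖p‖₁‖₂ : p ∈ Q*_{A,c} }`.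
(The terms with `p_k = 0` vanish, so the sum over `I*_p` equals the sum over all `k`.) -/
def kappaA {d N : ℕ} (a : Fin N → EuclideanSpace ℝ (Fin d)) : ℝ :=
  sSup {r | ∃ c : EuclideanSpace ℝ (Fin d), ‖c‖ = 1 ∧
    r = sInf {s | ∃ p ∈ Qstar a c, s = ∑ k, p k * ‖a k - (∑ j, p j)⁻¹ • c‖}}

/-- The projection `P_{G_A}(C) = Q_{A,b(C)}` with `b(C)_i = σ_C(a_i)`. -/
def PGA {d N : ℕ} (a : Fin N → EuclideanSpace ℝ (Fin d)) (C : Set (EuclideanSpace ℝ (Fin d))) :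
    Set (EuclideanSpace ℝ (Fin d)) :=
  Qset a (fun i => suppFn C (a i))

/-- The Hausdorff semi-distance `dist(S,T) = sup_{s ∈ S} inf_{t ∈ T} ‖s - t‖₂`. -/
def semiDist {d : ℕ} (S T : Set (EuclideanSpace ℝ (Fin d))) : ℝ :=
  sSup ((fun x => Metric.infDist x T) '' S)

/-! For `x ∈ PGA a C` outside `C`, let `y` be its nearest point in `C` and `c = (x - y) / ‖x - y‖`
the outer unit normal there, so that `dist(x, C) = ⟪c, x⟫ - σ_C(c)`. For `p ∈ Q*_{A,c}` with
`T = ‖p‖₁`, the constraints `⟪a k, x⟫ ≤ σ_C(a k)` give `⟪c, x⟫ ≤ ∑ p k σ_C(a k)`; the Lipschitz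
bound `σ_C(a k) ≤ σ_C(c / T) + ‖a k - c / T‖ ‖C‖` and homogeneity `T σ_C(c / T) = σ_C(c)` then
give `dist(x, C) ≤ (∑ p k ‖a k - c / T‖) ‖C‖`. The infimum over `p` is at most `κ_A` because
`Q_{A,0} = {0}` puts a ball around `0` inside the convex hull of the `a i`, so every unit `c` has a
representation with bounded `‖p‖₁`. -/

open Set

theorem convexHull_range_eq_image_stdSimplex {ι E : Type*} [Fintype ι] [AddCommGroup E]
    [Module ℝ E] (v : ι → E) :
    convexHull ℝ (range v) = Fintype.linearCombination ℝ v '' stdSimplex ℝ ι := by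
  classical
  rw [← convexHull_basis_eq_stdSimplex, LinearMap.image_convexHull, ← range_comp]
  congr 2
  ext i
  simp [Fintype.linearCombination_apply, ite_smul]

section SupportFunction

variable {d : ℕ} {C : Set (EuclideanSpace ℝ (Fin d))}

theorem inner_le_suppFn (hC : IsCompact C) {x : EuclideanSpace ℝ (Fin d)} (hx : x ∈ C)
    (v : EuclideanSpace ℝ (Fin d)) : ⟪v, x⟫ ≤ suppFn C v :=
  le_csSup (hC.image (continuous_const.inner continuous_id)).bddAbove ⟨x, hx, rfl⟩

theorem suppFn_le (hC : C.Nonempty) {v : EuclideanSpace ℝ (Fin d)} {M : ℝ}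
    (h : ∀ x ∈ C, ⟪v, x⟫ ≤ M) : suppFn C v ≤ M :=
  csSup_le (hC.image _) (forall_mem_image.2 h)

theorem suppFn_smul {t : ℝ} (ht : 0 ≤ t) (v : EuclideanSpace ℝ (Fin d)) :
    suppFn C (t • v) = t * suppFn C v := by
  rw [suppFn, suppFn, ← smul_eq_mul, ← Real.sSup_smul_of_nonneg ht, ← image_smul, image_image]
  simp only [real_inner_smul_left, smul_eq_mul]

theorem norm_le_setNorm (hC : IsCompact C) {x : EuclideanSpace ℝ (Fin d)} (hx : x ∈ C) :
    ‖x‖ ≤ setNorm C :=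
  le_csSup (hC.image continuous_norm).bddAbove ⟨x, hx, rfl⟩

theorem setNorm_nonneg (C : Set (EuclideanSpace ℝ (Fin d))) : 0 ≤ setNorm C :=
  Real.sSup_nonneg (forall_mem_image.2 fun x _ => norm_nonneg x)

theorem suppFn_le_suppFn_add (hCne : C.Nonempty) (hC : IsCompact C)
    (u v : EuclideanSpace ℝ (Fin d)) :
    suppFn C u ≤ suppFn C v + ‖u - v‖ * setNorm C := by
  refine suppFn_le hCne fun z hz => ?_
  calc ⟪u, z⟫ = ⟪v, z⟫ + ⟪u - v, z⟫ := by rw [inner_sub_left]; ring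
    _ ≤ suppFn C v + ‖u - v‖ * ‖z‖ := add_le_add (inner_le_suppFn hC hz v) (real_inner_le_norm _ _)
    _ ≤ suppFn C v + ‖u - v‖ * setNorm C := by gcongr; exact norm_le_setNorm hC hz

theorem exists_norm_eq_one_infDist_le (hCne : C.Nonempty) (hCconv : Convex ℝ C)
    (hC : IsCompact C) {x : EuclideanSpace ℝ (Fin d)} (hx : x ∉ C) :
    ∃ c : EuclideanSpace ℝ (Fin d), ‖c‖ = 1 ∧ Metric.infDist x C ≤ ⟪c, x⟫ - suppFn C c := by
  obtain ⟨y, hyC, hxy⟩ := hC.exists_infDist_eq_dist hCne x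
  have hxy0 : x - y ≠ 0 := sub_ne_zero.2 fun h => hx (h ▸ hyC)
  have hobtuse : ∀ z ∈ C, ⟪x - y, z - y⟫ ≤ 0 := by
    refine (norm_eq_iInf_iff_real_inner_le_zero hCconv hyC).1 ?_
    simp only [← dist_eq_norm, ← hxy, Metric.infDist_eq_iInf]
  have hσ : suppFn C (x - y) ≤ ⟪x - y, y⟫ := suppFn_le hCne fun z hz => by
    have := hobtuse z hz
    rw [inner_sub_right] at this
    linarith
  refine ⟨‖x - y‖⁻¹ • (x - y), by simp [norm_smul, hxy0], ?_⟩
  rw [real_inner_smul_left, suppFn_smul (by positivity), ← mul_sub]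
  calc Metric.infDist x C = ‖x - y‖⁻¹ * ⟪x - y, x - y⟫ := by
        rw [hxy, dist_eq_norm, real_inner_self_eq_norm_sq]
        field_simp [norm_ne_zero_iff.2 hxy0]
    _ ≤ ‖x - y‖⁻¹ * (⟪x - y, x⟫ - suppFn C (x - y)) := by
        gcongr
        rw [inner_sub_right]
        linarith

end SupportFunction

section Polytope

variable {d N : ℕ} (a : Fin N → EuclideanSpace ℝ (Fin d))

theorem subset_PGA {C : Set (EuclideanSpace ℝ (Fin d))} (hC : IsCompact C) : C ⊆ PGA a C :=
  fun _ hx i => inner_le_suppFn hC hx (a i)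

variable {a}

theorem sum_pos_of_mem_Qstar {c : EuclideanSpace ℝ (Fin d)} {p : Fin N → ℝ}
    (hp : p ∈ Qstar a c) (hc : c ≠ 0) : 0 < ∑ i, p i := by
  refine (Finset.sum_nonneg fun i _ => hp.1 i).lt_of_ne fun h => hc ?_
  rw [← hp.2, Finset.sum_eq_zero fun i _ => ?_]
  rw [(Finset.sum_eq_zero_iff_of_nonneg fun i _ => hp.1 i).1 h.symm i (Finset.mem_univ i),
    zero_smul]

theorem inner_le_suppFn_add_of_mem_Qstar {C : Set (EuclideanSpace ℝ (Fin d))}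
    (hCne : C.Nonempty) (hC : IsCompact C) {x c : EuclideanSpace ℝ (Fin d)} (hx : x ∈ PGA a C)
    {p : Fin N → ℝ} (hp : p ∈ Qstar a c) (hT : 0 < ∑ j, p j) :
    ⟪c, x⟫ ≤ suppFn C c + (∑ k, p k * ‖a k - (∑ j, p j)⁻¹ • c‖) * setNorm C := by
  set T := ∑ j, p j
  calc ⟪c, x⟫ = ∑ k, p k * ⟪a k, x⟫ := by
        simp only [← hp.2, sum_inner, real_inner_smul_left]
    _ ≤ ∑ k, p k * (suppFn C (T⁻¹ • c) + ‖a k - T⁻¹ • c‖ * setNorm C) := by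
        gcongr with k
        · exact hp.1 k
        · exact (hx k).trans (suppFn_le_suppFn_add hCne hC _ _)
    _ = T * suppFn C (T⁻¹ • c) + (∑ k, p k * ‖a k - T⁻¹ • c‖) * setNorm C := by
        simp only [mul_add, ← mul_assoc, Finset.sum_add_distrib, ← Finset.sum_mul, T]
    _ = suppFn C c + (∑ k, p k * ‖a k - T⁻¹ • c‖) * setNorm C := by
        rw [suppFn_smul (by positivity), ← mul_assoc, mul_inv_cancel₀ hT.ne', one_mul]

variable (a) in
def kappaCosts (c : EuclideanSpace ℝ (Fin d)) : Set ℝ :=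
  {s | ∃ p ∈ Qstar a c, s = ∑ k, p k * ‖a k - (∑ j, p j)⁻¹ • c‖}

theorem kappaCosts_nonneg {c : EuclideanSpace ℝ (Fin d)} {s : ℝ} (hs : s ∈ kappaCosts a c) :
    0 ≤ s := by
  obtain ⟨p, hp, rfl⟩ := hs
  exact Finset.sum_nonneg fun k _ => mul_nonneg (hp.1 k) (norm_nonneg _)

variable (a) in
theorem kappaA_nonneg : 0 ≤ kappaA a :=
  Real.sSup_nonneg fun _ ⟨_, _, hr⟩ => hr ▸ Real.sInf_nonneg fun _ => kappaCosts_nonneg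

theorem infDist_le_sInf_kappaCosts_mul {C : Set (EuclideanSpace ℝ (Fin d))}
    (hCne : C.Nonempty) (hC : IsCompact C) {x c : EuclideanSpace ℝ (Fin d)} (hx : x ∈ PGA a C)
    (hc : c ≠ 0) (hxc : Metric.infDist x C ≤ ⟪c, x⟫ - suppFn C c)
    (hne : (kappaCosts a c).Nonempty) :
    Metric.infDist x C ≤ sInf (kappaCosts a c) * setNorm C := by
  rw [mul_comm, ← smul_eq_mul, ← Real.sInf_smul_of_nonneg (setNorm_nonneg C)]
  refine le_csInf (hne.smul_set) ?_
  rintro _ ⟨_, ⟨p, hp, rfl⟩, rfl⟩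
  have := inner_le_suppFn_add_of_mem_Qstar hCne hC hx hp (sum_pos_of_mem_Qstar hp hc)
  dsimp only
  rw [smul_eq_mul]
  linarith

end Polytope

section PositiveSpanning

variable {d N : ℕ} {a : Fin N → EuclideanSpace ℝ (Fin d)}

/-- By compactness of the unit sphere, on which `x ↦ maxᵢ ⟪a i, x⟫` is positive. -/
theorem exists_pos_mul_norm_le_inner [Nonempty (Fin N)] (hQ0 : Qset a 0 = {0}) :
    ∃ ε > 0, ∀ x, ∃ i, ε * ‖x‖ ≤ ⟪a i, x⟫ := by
  let f : EuclideanSpace ℝ (Fin d) → ℝ := fun x =>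
    Finset.univ.sup' Finset.univ_nonempty fun i => ⟪a i, x⟫
  have hf : Continuous f :=
    Continuous.finset_sup'_apply _ fun i _ => continuous_const.inner continuous_id
  have hpos : ∀ x ∈ Metric.sphere (0 : EuclideanSpace ℝ (Fin d)) 1, 0 < f x := by
    intro x hx
    by_contra! h
    have hxQ : x ∈ Qset a 0 := fun i =>
      (Finset.le_sup' (fun i => ⟪a i, x⟫) (Finset.mem_univ i)).trans h
    rw [hQ0, mem_singleton_iff] at hxQ
    simp [hxQ] at hx
  obtain ⟨ε, hε, hεf⟩ := (isCompact_sphere 0 1).exists_forall_le' hf.continuousOn hpos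
  refine ⟨ε, hε, fun x => ?_⟩
  rcases eq_or_ne x 0 with rfl | hx
  · exact ⟨Classical.arbitrary _, by simp⟩
  obtain ⟨i, -, hi⟩ :=
    Finset.exists_mem_eq_sup' Finset.univ_nonempty fun i => ⟪a i, ‖x‖⁻¹ • x⟫
  have hεi : ε ≤ ⟪a i, ‖x‖⁻¹ • x⟫ := hi ▸ hεf (‖x‖⁻¹ • x) (by simp [norm_smul, hx])
  rw [ real_inner_smul_right, le_inv_mul_iff₀ (norm_pos_iff.2 hx), mul_comm] at hεi
  exact ⟨i, hεi⟩

theorem exists_closedBall_subset_convexHull_range [Nonempty (Fin N)] (hQ0 : Qset a 0 = {0}) :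
    ∃ ε > 0, Metric.closedBall 0 ε ⊆ convexHull ℝ (range a) := by
  obtain ⟨ε, hε, hεa⟩ := exists_pos_mul_norm_le_inner hQ0
  refine ⟨ε, hε, fun y hy => ?_⟩
  by_contra hy'
  obtain ⟨F, u, hFa, huy⟩ := geometric_hahn_banach_closed_point (convex_convexHull ℝ _)
    ((finite_range a).isCompact_convexHull ℝ).isClosed hy'
  set v := (InnerProductSpace.toDual ℝ _).symm F
  have hv : ∀ z, ⟪v, z⟫ = F z := fun z => InnerProductSpace.toDual_symm_apply
  obtain ⟨i, hi⟩ := hεa v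
  have hvai : ⟪a i, v⟫ < u := by
    rw [real_inner_comm, hv]
    exact hFa _ (subset_convexHull ℝ _ (mem_range_self i))
  have hvy : ⟪v, y⟫ ≤ ε * ‖v‖ :=
    (real_inner_le_norm v y).trans (by rw [mul_comm]; gcongr; simpa using hy)
  rw [← hv] at huy
  linarith

theorem exists_forall_exists_mem_Qstar_sum_le [Nonempty (Fin N)] (hQ0 : Qset a 0 = {0}) :
    ∃ M, ∀ c, ‖c‖ = 1 → ∃ p ∈ Qstar a c, ∑ j, p j ≤ M := by
  obtain ⟨ε, hε, hball⟩ := exists_closedBall_subset_convexHull_range hQ0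
  refine ⟨ε⁻¹, fun c hc => ?_⟩
  have hεc : ε • c ∈ convexHull ℝ (range a) := hball (by simp [norm_smul, hc, abs_of_pos hε])
  rw [convexHull_range_eq_image_stdSimplex] at hεc
  obtain ⟨w, ⟨hw0, hw1⟩, hwc⟩ := hεc
  rw [Fintype.linearCombination_apply] at hwc
  refine ⟨ε⁻¹ • w, ⟨fun i => mul_nonneg (inv_nonneg.2 hε.le) (hw0 i), ?_⟩, ?_⟩
  · simp only [Pi.smul_apply, smul_eq_mul, ← smul_smul, ← Finset.smul_sum, hwc,
      inv_smul_smul₀ hε.ne']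
  · simp [← Finset.mul_sum, hw1]

theorem sum_mul_norm_sub_le (ha_norm : ∀ i, ‖a i‖ = 1) {c : EuclideanSpace ℝ (Fin d)}
    (hc : ‖c‖ = 1) {p : Fin N → ℝ} (hp : p ∈ Qstar a c) :
    ∑ k, p k * ‖a k - (∑ j, p j)⁻¹ • c‖ ≤ ∑ j, p j + 1 := by
  have hT := sum_pos_of_mem_Qstar hp (norm_ne_zero_iff.1 (hc ▸ one_ne_zero))
  set T := ∑ j, p j
  calc ∑ k, p k * ‖a k - T⁻¹ • c‖ ≤ ∑ k, p k * (1 + T⁻¹) := by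
        gcongr with k
        · exact hp.1 k
        calc ‖a k - T⁻¹ • c‖ ≤ ‖a k‖ + ‖T⁻¹ • c‖ := norm_sub_le _ _
          _ = 1 + T⁻¹ := by rw [ha_norm, norm_smul, hc, mul_one, Real.norm_of_nonneg (inv_nonneg.2 hT.le)]
    _ = T + 1 := by rw [← Finset.sum_mul, mul_add, mul_one, mul_inv_cancel₀ hT.ne']

theorem kappaCosts_nonempty [Nonempty (Fin N)] (hQ0 : Qset a 0 = {0})
    {c : EuclideanSpace ℝ (Fin d)} (hc : ‖c‖ = 1) : (kappaCosts a c).Nonempty := by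
  obtain ⟨M, hM⟩ := exists_forall_exists_mem_Qstar_sum_le hQ0
  obtain ⟨p, hp, -⟩ := hM c hc
  exact ⟨_, p, hp, rfl⟩

theorem sInf_kappaCosts_le_kappaA [Nonempty (Fin N)] (hQ0 : Qset a 0 = {0})
    (ha_norm : ∀ i, ‖a i‖ = 1) {c : EuclideanSpace ℝ (Fin d)} (hc : ‖c‖ = 1) :
    sInf (kappaCosts a c) ≤ kappaA a := by
  obtain ⟨M, hM⟩ := exists_forall_exists_mem_Qstar_sum_le hQ0
  refine le_csSup ⟨M + 1, ?_⟩ ⟨c, hc, rfl⟩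
  rintro _ ⟨c', hc', rfl⟩
  obtain ⟨p, hp, hpM⟩ := hM c' hc'
  calc sInf (kappaCosts a c') ≤ ∑ k, p k * ‖a k - (∑ j, p j)⁻¹ • c'‖ :=
        csInf_le ⟨0, fun _ => kappaCosts_nonneg⟩ ⟨p, hp, rfl⟩
    _ ≤ M + 1 := (sum_mul_norm_sub_le ha_norm hc' hp).trans (by linarith)

end PositiveSpanning

theorem stmt_18_general (d N : ℕ) (hN : 1 ≤ N)
    (a : Fin N → EuclideanSpace ℝ (Fin d))
    (ha_norm : ∀ i, ‖a i‖ = 1)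
    (hQ0 : Qset a 0 = {0})
    (C : Set (EuclideanSpace ℝ (Fin d)))
    (hCne : C.Nonempty) (hCconv : Convex ℝ C) (hCcomp : IsCompact C) :
    C ⊆ PGA a C ∧ semiDist (PGA a C) C ≤ kappaA a * setNorm C := by
  have := Fin.pos_iff_nonempty.1 hN
  refine ⟨subset_PGA a hCcomp, ?_⟩
  have hκ : 0 ≤ kappaA a * setNorm C := mul_nonneg (kappaA_nonneg a) (setNorm_nonneg C)
  refine Real.sSup_le (forall_mem_image.2 fun x hx => ?_) hκ
  by_cases hxC : x ∈ C
  · rwa [Metric.infDist_zero_of_mem hxC]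
  obtain ⟨c, hc, hxc⟩ := exists_norm_eq_one_infDist_le hCne hCconv hCcomp hxC
  calc Metric.infDist x C ≤ sInf (kappaCosts a c) * setNorm C :=
        infDist_le_sInf_kappaCosts_mul hCne hCcomp hx (norm_ne_zero_iff.1 (hc ▸ one_ne_zero))
          hxc (kappaCosts_nonempty hQ0 hc)
    _ ≤ kappaA a * setNorm C := by
        gcongr
        · exact setNorm_nonneg C
        · exact sInf_kappaCosts_le_kappaA hQ0 ha_norm hc

theorem stmt_18 (d N : ℕ) (hd : 1 ≤ d) (hN : 1 ≤ N)
    (a : Fin N → EuclideanSpace ℝ (Fin d))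
    (ha_inj : Function.Injective a) (ha_norm : ∀ i, ‖a i‖ = 1)
    (hQ0 : Qset a 0 = {0})
    (C : Set (EuclideanSpace ℝ (Fin d)))
    (hCne : C.Nonempty) (hCconv : Convex ℝ C) (hCcomp : IsCompact C) :
    C ⊆ PGA a C ∧ semiDist (PGA a C) C ≤ kappaA a * setNorm C :=
  stmt_18_general d N hN a ha_norm hQ0 C hCne hCconv hCcomp
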